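/- For each fixed y₀ ∈ ℝ, the curve x ↦ Ψ(x,y₀) = cos y₀·(0, cos x, sin x, 0) + sin y₀·(cos x, 0, 0, sin x) is a great circle of S³; consequently the surface {p ∈ S³ : p₁p₃ = p₂p₄} is doubly ruled by the two families of great circles {x = const} and {y = const}. -/

import Mathlib

open Real

def sphere3 : Set (Fin 4 → ℝ) := {p | ∑ i, p i ^ 2 = 1}

noncomputable def Psi (x y : ℝ) : Fin 4 → ℝ :=
  ![Real.cos x * Real.sin y, Real.cos x * Real.cos y,
    Real.sin x * Real.cos y, Real.sin x * Real.sin y]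

def cliffordT' : Set (Fin 4 → ℝ) := {p ∈ sphere3 | p 0 * p 2 = p 1 * p 3}

/-!
For fixed `y`, `Ψ(x, y) = cos x • u + sin x • w` with `u = (sin y, cos y, 0, 0)` and
`w = (0, 0, cos y, sin y)` orthonormal, so `x ↦ Ψ(x, y)` runs through the unit circle of
`span {u, w}`.

Conversely, every point `p` of the surface is some `Ψ(x, y)`: the vectors
`(p 1 - p 3, p 2 + p 0)` and `(p 1 + p 3, p 2 - p 0)` have squared length
`1 ± 2 (p 0 * p 2 - p 1 * p 3) = 1`, so they are `(cos α, sin α)` and `(cos β, sin β)`, and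
`x = (α + β) / 2`, `y = (α - β) / 2` work by the addition formulas.
-/

open Matrix

lemma exists_cos_sin_eq {a b : ℝ} (h : a ^ 2 + b ^ 2 = 1) :
    ∃ θ : ℝ, cos θ = a ∧ sin θ = b := by
  obtain ⟨θ, hθ⟩ := (Complex.norm_eq_one_iff ⟨a, b⟩).mp <| by
    rw [Complex.norm_def, Complex.normSq_mk, ← sq, ← sq, h, Real.sqrt_one]
  refine ⟨θ, ?_, ?_⟩
  · simpa [Complex.exp_mul_I, ← Complex.ofReal_cos, ← Complex.ofReal_sin] using
      congrArg Complex.re hθ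
  · simpa [Complex.exp_mul_I, ← Complex.ofReal_cos, ← Complex.ofReal_sin] using
      congrArg Complex.im hθ

section GreatCircle

variable {ι : Type*} [Fintype ι] {u w : ι → ℝ}

lemma dotProduct_self_smul_add_smul (hu : u ⬝ᵥ u = 1) (hw : w ⬝ᵥ w = 1) (huw : u ⬝ᵥ w = 0)
    (a b : ℝ) : (a • u + b • w) ⬝ᵥ (a • u + b • w) = a ^ 2 + b ^ 2 := by
  simp only [add_dotProduct, dotProduct_add, smul_dotProduct, dotProduct_smul, smul_eq_mul,
    hu, hw, huw, dotProduct_comm w u]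
  ring

lemma linearIndependent_pair_of_orthonormal (hu : u ⬝ᵥ u = 1) (hw : w ⬝ᵥ w = 1)
    (huw : u ⬝ᵥ w = 0) : LinearIndependent ℝ ![u, w] := by
  refine LinearIndependent.pair_iff.mpr fun a b h => ?_
  have ha := congrArg (u ⬝ᵥ ·) h
  have hb := congrArg (w ⬝ᵥ ·) h
  simp only [dotProduct_add, dotProduct_smul, smul_eq_mul, hu, hw, huw, dotProduct_comm w u,
    dotProduct_zero] at ha hb
  constructor <;> linarith

lemma range_cos_smul_add_sin_smul (hu : u ⬝ᵥ u = 1) (hw : w ⬝ᵥ w = 1) (huw : u ⬝ᵥ w = 0) :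
    Set.range (fun x => cos x • u + sin x • w) =
      {p | p ⬝ᵥ p = 1} ∩ (Submodule.span ℝ {u, w} : Set (ι → ℝ)) := by
  ext p
  constructor
  · rintro ⟨x, rfl⟩
    refine ⟨?_, ?_⟩
    · simp only [Set.mem_ofPred_eq, dotProduct_self_smul_add_smul hu hw huw, cos_sq_add_sin_sq]
    · exact Submodule.mem_span_pair.mpr ⟨_, _, rfl⟩
  · rintro ⟨hp, hspan⟩
    obtain ⟨a, b, rfl⟩ := Submodule.mem_span_pair.mp hspan
    rw [Set.mem_ofPred_eq, dotProduct_self_smul_add_smul hu hw huw] at hp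
    obtain ⟨x, rfl, rfl⟩ := exists_cos_sin_eq hp
    exact ⟨x, rfl⟩

lemma finrank_span_pair_of_orthonormal (hu : u ⬝ᵥ u = 1) (hw : w ⬝ᵥ w = 1)
    (huw : u ⬝ᵥ w = 0) : Module.finrank ℝ (Submodule.span ℝ {u, w}) = 2 := by
  have h := finrank_span_eq_card (linearIndependent_pair_of_orthonormal hu hw huw)
  rwa [Matrix.range_cons, Matrix.range_cons, Matrix.range_empty, Set.union_empty,
    Set.singleton_union, Fintype.card_fin] at h

end GreatCircle

lemma sphere3_eq : sphere3 = {p | p ⬝ᵥ p = 1} := by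
  simp only [sphere3, dotProduct, sq]

lemma Psi_eq (x y : ℝ) :
    Psi x y = cos x • ![sin y, cos y, 0, 0] + sin x • ![0, 0, cos y, sin y] := by
  ext i; fin_cases i <;> simp [Psi]

lemma Psi_mem_cliffordT' (x y : ℝ) : Psi x y ∈ cliffordT' := by
  refine ⟨?_, ?_⟩ <;>
    simp only [sphere3, Set.mem_ofPred_eq, Fin.sum_univ_four, Psi, cons_val_zero,
      cons_val_one, cons_val]
  · nlinarith [sin_sq_add_cos_sq x, sin_sq_add_cos_sq y]
  · ring

lemma range_uncurry_Psi : Set.range (Function.uncurry Psi) = cliffordT' := by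
  refine subset_antisymm (Set.range_subset_iff.mpr fun xy => Psi_mem_cliffordT' _ _) ?_
  rintro p ⟨hs, hc⟩
  simp only [sphere3, Set.mem_ofPred_eq, Fin.sum_univ_four] at hs
  obtain ⟨α, hcα, hsα⟩ := exists_cos_sin_eq (a := p 1 - p 3) (b := p 2 + p 0) (by nlinarith)
  obtain ⟨β, hcβ, hsβ⟩ := exists_cos_sin_eq (a := p 1 + p 3) (b := p 2 - p 0) (by nlinarith)
  obtain ⟨x, y, rfl, rfl⟩ : ∃ x y, α = x + y ∧ β = x - y :=
    ⟨(α + β) / 2, (α - β) / 2, by ring, by ring⟩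
  rw [cos_add] at hcα
  rw [sin_add] at hsα
  rw [cos_sub] at hcβ
  rw [sin_sub] at hsβ
  refine ⟨(x, y), ?_⟩
  ext i; fin_cases i <;> simp [Psi] <;> linarith

theorem stmt_6 :
    -- each curve {y = y₀} is a great circle
    (∀ y₀ : ℝ, ∃ V : Submodule ℝ (Fin 4 → ℝ),
      Module.finrank ℝ V = 2 ∧
      Set.range (fun x => Psi x y₀) = sphere3 ∩ (V : Set (Fin 4 → ℝ))) ∧
    -- consequently the surface is doubly ruled: every point lies on one circle of
    -- each family, both circles being contained in the surface
    (∀ p ∈ cliffordT', ∃ x y : ℝ, Psi x y = p ∧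
      Set.range (fun t => Psi x t) ⊆ cliffordT' ∧
      Set.range (fun t => Psi t y) ⊆ cliffordT') := by
  refine ⟨fun y => ?_, fun p hp => ?_⟩
  · have hu : ![sin y, cos y, 0, 0] ⬝ᵥ ![sin y, cos y, 0, 0] = 1 := by
      simp [dotProduct, Fin.sum_univ_four, ← sq]
    have hw : ![0, 0, cos y, sin y] ⬝ᵥ ![0, 0, cos y, sin y] = 1 := by
      simp [dotProduct, Fin.sum_univ_four, ← sq]
    have huw : ![sin y, cos y, 0, 0] ⬝ᵥ ![0, 0, cos y, sin y] = 0 := by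
      simp [dotProduct, Fin.sum_univ_four]
    refine ⟨_, finrank_span_pair_of_orthonormal hu hw huw, ?_⟩
    simp only [Psi_eq, sphere3_eq, range_cos_smul_add_sin_smul hu hw huw]
  · rw [← range_uncurry_Psi] at hp
    obtain ⟨⟨x, y⟩, rfl⟩ := hp
    exact ⟨x, y, rfl, Set.range_subset_iff.mpr fun t => Psi_mem_cliffordT' x t,
      Set.range_subset_iff.mpr fun t => Psi_mem_cliffordT' t y⟩
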